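/- For every positive integer n, n ⊕ (3n) = n ⊕_{-2} (-n), where ⊕ is bitwise XOR of binary expansions and ⊕_{-2} is digitwise addition mod 2 of base-(-2) expansions, read off as a binary number. -/

import Mathlib

/-- The `i`-th digit of the base-`b` expansion of `n`. -/
def bDigit (b n i : ℕ) : ℕ := (Nat.digits b n).getD i 0

/-- One step of the base-`(-b)` digit extraction: remove the least digit and divide by `-b`. -/
def negaStep (b m : ℤ) : ℤ := (m - m % b) / (-b)

/-- The `i`-th digit of the base-`(-b)` expansion of the integer `m`
(digits lie in `{0,...,b-1}` when `b ≥ 2`). -/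
def negaDigit (b m : ℤ) (i : ℕ) : ℤ := ((negaStep b)^[i] m) % b

/-- Digitwise addition mod `b` of base-`(-b)` expansions, read off in powers of `+b`. -/
noncomputable def oplusNeg (b α β : ℤ) : ℤ :=
  ∑ᶠ i : ℕ, ((negaDigit b α i + negaDigit b β i) % b) * b ^ i

/-- Digitwise addition mod `b` of base-`b` expansions. -/
noncomputable def oplus (b α β : ℕ) : ℕ :=
  ∑ᶠ i : ℕ, ((bDigit b α i + bDigit b β i) % b) * b ^ i

/-- Digitwise subtraction mod `b` of base-`b` expansions. -/
noncomputable def ominus (b α β : ℕ) : ℕ :=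
  ∑ᶠ i : ℕ, ((((bDigit b α i : ℤ) - (bDigit b β i : ℤ)) % (b : ℤ)).toNat) * b ^ i

/-- Flattening: replace each nonzero base-`b` digit by `1`. -/
noncomputable def flat (b n : ℕ) : ℕ :=
  ∑ᶠ i : ℕ, min (bDigit b n i) 1 * b ^ i

/-- The carry sequence for multiplying `n` by `b+1` in base `b`. -/
def carrySeq (b n : ℕ) : ℕ → ℕ
  | 0 => 0
  | k + 1 => (bDigit b n k + carrySeq b n k) / b + bDigit b n k

/-! Both sides obey the same digit recursion: dropping the last digit adds `(α + β) mod 2` in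
front and sends `(α, β)` to `(⌊α/2⌋, ⌊β/2⌋)` on the binary side and to `(-⌊α/2⌋, -⌊β/2⌋)`
on the base `-2` side. For `n = 2m` or `2m + 1` this takes `(n, 3n)` to `(m, 3m)` or
`(m, 3m + 1)`, and `(n, -n)` to `(-m, m)` or `(-m, m + 1)`. Hence the theorem follows by strong
induction together with the companion identity `n ⊕ (3n + 1) = (-n) ⊕₋₂ (n + 1)`, whose odd
case comes back to the theorem at `m + 1` through the carry identity
`m ⊕ (3m + 2) = (m + 1) ⊕ 3(m + 1)`. -/

theorem finsum_eq_sum_range_of_forall_ge {M : Type*} [AddCommMonoid M] {f : ℕ → M} {N : ℕ}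
    (hf : ∀ i, N ≤ i → f i = 0) : ∑ᶠ i, f i = ∑ i ∈ Finset.range N, f i :=
  finsum_eq_sum_of_support_subset f fun i hi => by
    by_contra h
    simp_all

theorem finsum_mul_pow_eq_add_mul_finsum_succ {R : Type*} [CommSemiring R] (b : R) {f : ℕ → R}
    {N : ℕ} (hf : ∀ i, N ≤ i → f i = 0) :
    ∑ᶠ i, f i * b ^ i = f 0 + b * ∑ᶠ i, f (i + 1) * b ^ i := by
  rw [finsum_eq_sum_range_of_forall_ge (N := N + 1) fun i hi => by simp [hf i (by omega)],
    finsum_eq_sum_range_of_forall_ge (N := N) fun i hi => by simp [hf (i + 1) (by omega)],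
    Finset.sum_range_succ', Finset.mul_sum, add_comm]
  simp only [pow_zero, mul_one, pow_succ]
  congr 1
  exact Finset.sum_congr rfl fun i _ => by ring

theorem bDigit_eq {b : ℕ} (hb : 2 ≤ b) (n i : ℕ) : bDigit b n i = n / b ^ i % b :=
  Nat.getD_digits n i hb

theorem oplus_eq_mod_add_mul {b : ℕ} (hb : 2 ≤ b) (α β : ℕ) :
    oplus b α β = (α % b + β % b) % b + b * oplus b (α / b) (β / b) := by
  have hlt : ∀ n i, n ≤ i → n / b ^ i = 0 := fun n i hi =>
    Nat.div_eq_of_lt ((Nat.lt_pow_self hb).trans_le' hi)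
  unfold oplus
  rw [finsum_mul_pow_eq_add_mul_finsum_succ (b : ℕ) (N := α + β) fun i hi => by
    simp [bDigit_eq hb, hlt α i (by omega), hlt β i (by omega)]]
  simp only [bDigit_eq hb, pow_zero, Nat.div_one, pow_succ', ← Nat.div_div_eq_div_mul]

theorem negaStep_eq {b : ℤ} (hb : b ≠ 0) (m : ℤ) : negaStep b m = -(m / b) := by
  rw [negaStep, Int.emod_def, sub_sub_cancel, Int.ediv_neg, Int.mul_ediv_cancel_left _ hb]

theorem natAbs_negaStep_lt {b m : ℤ} (hb : 2 ≤ b) (hm : m ≠ 0) (hm1 : m ≠ -1) :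
    (negaStep b m).natAbs < m.natAbs := by
  rw [negaStep_eq (by omega), Int.natAbs_neg]
  have hdiv := Int.emod_add_mul_ediv m b
  have h0 := Int.emod_nonneg m (by omega : b ≠ 0)
  have h1 := Int.emod_lt_of_pos m (by omega : 0 < b)
  rcases lt_or_gt_of_ne hm with hneg | hpos
  · have hq : m / b < 0 := by nlinarith
    have : b * (m / b + 1) ≤ 2 * (m / b + 1) := by nlinarith
    have : m < 2 * (m / b) + 2 := by nlinarith
    omega
  · have hq : 0 ≤ m / b := Int.ediv_nonneg hpos.le (by omega)
    have : m / b < m := by nlinarith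
    omega

theorem exists_iterate_negaStep_eq_zero {b : ℤ} (hb : 2 ≤ b) (m : ℤ) :
    ∃ N, (negaStep b)^[N] m = 0 := by
  induction h : m.natAbs using Nat.strong_induction_on generalizing m with
  | _ k ih =>
  by_cases h0 : m = 0
  · exact ⟨0, h0⟩
  by_cases h1 : m = -1
  · refine ⟨2, ?_⟩
    have hb0 : b ≠ 0 := by omega
    have hdiv : -1 / b = -1 := Int.ediv_eq_neg_one_of_neg_of_le (by omega) (by omega)
    have hone : 1 / b = 0 := Int.ediv_eq_zero_of_lt zero_le_one (by omega)
    simp [negaStep_eq hb0, h1, hdiv, hone]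
  obtain ⟨N, hN⟩ := ih _ (h ▸ natAbs_negaStep_lt hb h0 h1) _ rfl
  exact ⟨N + 1, hN⟩

theorem exists_negaDigit_eq_zero {b : ℤ} (hb : 2 ≤ b) (m : ℤ) :
    ∃ N, ∀ i, N ≤ i → negaDigit b m i = 0 := by
  obtain ⟨N, hN⟩ := exists_iterate_negaStep_eq_zero hb m
  have hfix : negaStep b 0 = 0 := by simp [negaStep_eq (by omega : b ≠ 0)]
  refine ⟨N, fun i hi => ?_⟩
  rw [negaDigit, ← Nat.sub_add_cancel hi, Function.iterate_add_apply, hN,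
    Function.iterate_fixed hfix, Int.zero_emod]

theorem oplusNeg_eq_emod_add_mul {b : ℤ} (hb : 2 ≤ b) (α β : ℤ) :
    oplusNeg b α β =
      (α % b + β % b) % b + b * oplusNeg b (negaStep b α) (negaStep b β) := by
  obtain ⟨Nα, hα⟩ := exists_negaDigit_eq_zero hb α
  obtain ⟨Nβ, hβ⟩ := exists_negaDigit_eq_zero hb β
  unfold oplusNeg
  rw [finsum_mul_pow_eq_add_mul_finsum_succ b (N := max Nα Nβ) fun i hi => by
    simp [hα i (by omega), hβ i (by omega)]]
  simp only [negaDigit, Function.iterate_zero_apply, Function.iterate_succ_apply]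

theorem oplusNeg_comm (b α β : ℤ) : oplusNeg b α β = oplusNeg b β α :=
  finsum_congr fun i => by rw [add_comm (negaDigit b α i)]

theorem oplus_two_of_div {α β α' β' : ℕ} (hα : α / 2 = α') (hβ : β / 2 = β') :
    oplus 2 α β = (α % 2 + β % 2) % 2 + 2 * oplus 2 α' β' :=
  hα ▸ hβ ▸ oplus_eq_mod_add_mul le_rfl α β

theorem oplusNeg_two_of_neg_ediv {α β α' β' : ℤ} (hα : -(α / 2) = α') (hβ : -(β / 2) = β') :
    oplusNeg 2 α β = (α % 2 + β % 2) % 2 + 2 * oplusNeg 2 α' β' := by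
  rw [oplusNeg_eq_emod_add_mul le_rfl, negaStep_eq two_ne_zero, negaStep_eq two_ne_zero, hα, hβ]

theorem oplus_two_three_mul_add_two (m : ℕ) :
    oplus 2 m (3 * m + 2) = oplus 2 (m + 1) (3 * (m + 1)) := by
  induction m using Nat.strong_induction_on with
  | _ m ih =>
  obtain ⟨j, rfl | rfl⟩ := Nat.even_or_odd' m
  · rw [oplus_two_of_div (show 2 * j / 2 = j by omega)
        (show (3 * (2 * j) + 2) / 2 = 3 * j + 1 by omega),
      oplus_two_of_div (show (2 * j + 1) / 2 = j by omega)
        (show 3 * (2 * j + 1) / 2 = 3 * j + 1 by omega)]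
    omega
  · rw [oplus_two_of_div (show (2 * j + 1) / 2 = j by omega)
        (show (3 * (2 * j + 1) + 2) / 2 = 3 * j + 2 by omega),
      oplus_two_of_div (show (2 * j + 1 + 1) / 2 = j + 1 by omega)
        (show 3 * (2 * j + 1 + 1) / 2 = 3 * (j + 1) by omega), ih j (by omega)]
    omega

theorem oplus_two_three_mul_add_one_eq_oplusNeg (n : ℕ)
    (h : (oplus 2 ((n + 1) / 2) (3 * ((n + 1) / 2)) : ℤ) =
      oplusNeg 2 ((n + 1) / 2 : ℕ) (-((n + 1) / 2 : ℕ))) :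
    (oplus 2 n (3 * n + 1) : ℤ) = oplusNeg 2 (-n) (n + 1) := by
  obtain ⟨m, rfl | rfl⟩ := Nat.even_or_odd' n
  · rw [show (2 * m + 1) / 2 = m by omega] at h
    rw [oplus_two_of_div (show 2 * m / 2 = m by omega)
        (show (3 * (2 * m) + 1) / 2 = 3 * m by omega),
      oplusNeg_two_of_neg_ediv (α' := m) (β' := -m) (by omega) (by omega)]
    push_cast at h ⊢
    omega
  · rw [show (2 * m + 1 + 1) / 2 = m + 1 by omega] at h
    rw [oplus_two_of_div (show (2 * m + 1) / 2 = m by omega)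
        (show (3 * (2 * m + 1) + 1) / 2 = 3 * m + 2 by omega),
      oplus_two_three_mul_add_two,
      oplusNeg_two_of_neg_ediv (α' := m + 1) (β' := -(m + 1)) (by omega) (by omega)]
    push_cast at h ⊢
    omega

theorem oplus_two_three_mul_eq_oplusNeg (n : ℕ) :
    (oplus 2 n (3 * n) : ℤ) = oplusNeg 2 n (-n) := by
  induction n using Nat.strong_induction_on with
  | _ n ih =>
  obtain ⟨m, rfl | rfl⟩ := Nat.even_or_odd' n
  · rcases Nat.eq_zero_or_pos m with rfl | hm
    · have hfix : negaStep 2 0 = 0 := by decide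
      simp [oplus, oplusNeg, bDigit, negaDigit, Function.iterate_fixed hfix]
    have h := ih m (by omega)
    rw [oplus_two_of_div (show 2 * m / 2 = m by omega)
        (show 3 * (2 * m) / 2 = 3 * m by omega),
      oplusNeg_two_of_neg_ediv (α' := -m) (β' := m) (by omega) (by omega)]
    rw [oplusNeg_comm]
    push_cast at h ⊢
    omega
  · have h := oplus_two_three_mul_add_one_eq_oplusNeg m (ih _ (by omega))
    rw [oplus_two_of_div (show (2 * m + 1) / 2 = m by omega)
        (show 3 * (2 * m + 1) / 2 = 3 * m + 1 by omega),
      oplusNeg_two_of_neg_ediv (α' := -m) (β' := m + 1) (by omega) (by omega)]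
    push_cast at h ⊢
    omega

theorem stmt2_general (n : ℕ) :
    (oplus 2 n (3 * n) : ℤ) = oplusNeg 2 (n : ℤ) (-(n : ℤ)) :=
  oplus_two_three_mul_eq_oplusNeg n

theorem stmt2 (n : ℕ) (hn : 0 < n) :
    (oplus 2 n (3 * n) : ℤ) = oplusNeg 2 (n : ℤ) (-(n : ℤ)) :=
  stmt2_general n
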